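/- arXiv:1112.0096 — 3 statements merged into one kernel-verified Lean document; each statement's English description precedes it below -/
import Mathlib

section
/- Let e : [0,∞) → (0,1] be absolutely continuous and non-increasing with r ↦ r·e(r) strictly increasing, and let Ψ_e(r) = (r^{3/2}/2) ∫₀¹ (1 - e(√r z)²) z³ dz. Then Ψ_e is convex and non-decreasing on [0,∞). -/
/-!
Substituting `u = r z²` gives `Ψ_e(r) = I(r) / (4 √r)` with `I(r) = ∫₀ʳ u p(u) du`, where
`p(u) = 1 - e(√u)²` is nonnegative and nondecreasing. For `r > 0` the derivative of `I(r)/√r` is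
`√r p(r) - I(r) / (2 r √r)`. It is nonnegative because `I(r) ≤ p(r) r² / 2`, and nondecreasing
because `I(b) - I(a) ≤ p(b) (b² - a²) / 2` together with `b² - a² ≤ 4 b √b (√b - √a)`.
At `0`, continuity follows from `0 ≤ I(r)/√r ≤ p(r) r √r / 2`.
-/

open Real Filter Set MeasureTheory

/-- The energy dissipation potential `Ψ_e`. -/
noncomputable def dissipationPotential (e : ℝ → ℝ) (r : ℝ) : ℝ :=
  r ^ ((3 : ℝ) / 2) / 2 * ∫ z in (0 : ℝ)..1, (1 - (e (Real.sqrt r * z)) ^ 2) * z ^ 3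

open Topology

noncomputable def firstMoment (p : ℝ → ℝ) (r : ℝ) : ℝ := ∫ u in (0 : ℝ)..r, u * p u

noncomputable def firstMomentRatio (p : ℝ → ℝ) (r : ℝ) : ℝ := firstMoment p r / √r

noncomputable def firstMomentRatioDeriv (p : ℝ → ℝ) (r : ℝ) : ℝ :=
  √r * p r - firstMoment p r / (2 * r * √r)

section FirstMoment

variable {p : ℝ → ℝ}

theorem firstMoment_zero : firstMoment p 0 = 0 :=
  intervalIntegral.integral_same

theorem firstMoment_nonneg (hm : MonotoneOn p (Ici 0)) (h0 : 0 ≤ p 0) {r : ℝ} (hr : 0 ≤ r) :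
    0 ≤ firstMoment p r :=
  intervalIntegral.integral_nonneg hr fun _ hu =>
    mul_nonneg hu.1 (h0.trans (hm self_mem_Ici hu.1 hu.1))

theorem hasDerivAt_firstMoment (hc : Continuous p) (r : ℝ) :
    HasDerivAt (firstMoment p) (r * p r) r :=
  intervalIntegral.integral_hasDerivAt_right ((continuous_id.mul hc).intervalIntegrable 0 r)
    ((continuous_id.mul hc).stronglyMeasurableAtFilter _ _) (continuous_id.mul hc).continuousAt

theorem firstMoment_sub_le (hc : Continuous p) (hm : MonotoneOn p (Ici 0)) {a b : ℝ}
    (ha : 0 ≤ a) (hab : a ≤ b) : firstMoment p b - firstMoment p a ≤ p b * (b ^ 2 - a ^ 2) / 2 := by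
  have hint : ∀ s t : ℝ, IntervalIntegrable (fun u => u * p u) volume s t :=
    fun s t => (continuous_id.mul hc).intervalIntegrable s t
  calc firstMoment p b - firstMoment p a = ∫ u in a..b, u * p u :=
        intervalIntegral.integral_interval_sub_left (hint 0 b) (hint 0 a)
    _ ≤ ∫ u in a..b, u * p b := by
        refine intervalIntegral.integral_mono_on hab (hint a b)
          ((continuous_mul_const (p b)).intervalIntegrable a b) fun u hu => ?_
        exact mul_le_mul_of_nonneg_left (hm (ha.trans hu.1) (ha.trans hab) hu.2) (ha.trans hu.1)
    _ = p b * (b ^ 2 - a ^ 2) / 2 := by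
        rw [intervalIntegral.integral_mul_const, integral_id]; ring

theorem firstMoment_le (hc : Continuous p) (hm : MonotoneOn p (Ici 0)) {r : ℝ} (hr : 0 ≤ r) :
    firstMoment p r ≤ p r * r ^ 2 / 2 := by
  simpa [firstMoment_zero] using firstMoment_sub_le hc hm le_rfl hr

theorem hasDerivAt_firstMomentRatio (hc : Continuous p) {r : ℝ} (hr : 0 < r) :
    HasDerivAt (firstMomentRatio p) (firstMomentRatioDeriv p r) r := by
  have hs : 0 < √r := sqrt_pos.2 hr
  refine ((hasDerivAt_firstMoment hc r).div (hasDerivAt_sqrt hr.ne') hs.ne').congr_deriv ?_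
  rw [firstMomentRatioDeriv, sq_sqrt hr.le]
  field_simp

theorem firstMomentRatioDeriv_nonneg (hc : Continuous p) (hm : MonotoneOn p (Ici 0))
    (h0 : 0 ≤ p 0) {r : ℝ} (hr : 0 < r) : 0 ≤ firstMomentRatioDeriv p r := by
  rw [firstMomentRatioDeriv, sub_nonneg, div_le_iff₀ (by positivity)]
  calc firstMoment p r ≤ p r * r ^ 2 / 2 := firstMoment_le hc hm hr.le
    _ ≤ 2 * r ^ 2 * p r := by
        have := h0.trans (hm self_mem_Ici hr.le hr.le)
        nlinarith
    _ = √r * p r * (2 * r * √r) := by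
        linear_combination (-2 * r * p r) * mul_self_sqrt hr.le

theorem firstMomentRatioDeriv_sq_le (hc : Continuous p) (hm : MonotoneOn p (Ici 0))
    (h0 : 0 ≤ p 0) {x y : ℝ} (hx : 0 < x) (hxy : x ≤ y) :
    firstMomentRatioDeriv p (x ^ 2) ≤ firstMomentRatioDeriv p (y ^ 2) := by
  have hy : 0 < y := hx.trans_le hxy
  have hab : x ^ 2 ≤ y ^ 2 := pow_le_pow_left₀ hx.le hxy 2
  have hpab : p (x ^ 2) ≤ p (y ^ 2) := hm (sq_nonneg x) (sq_nonneg y) hab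
  have hpb : 0 ≤ p (y ^ 2) := h0.trans (hm self_mem_Ici (sq_nonneg y) (sq_nonneg y))
  have hIa : 0 ≤ firstMoment p (x ^ 2) := firstMoment_nonneg hm h0 (sq_nonneg x)
  have hIb := firstMoment_sub_le hc hm (sq_nonneg x) hab
  have hquartic : (y ^ 2) ^ 2 - (x ^ 2) ^ 2 ≤ 4 * y ^ 3 * (y - x) := by
    nlinarith [mul_nonneg (sub_nonneg.2 hxy)
      (by nlinarith : (0:ℝ) ≤ 4 * y ^ 3 - (y ^ 3 + y ^ 2 * x + y * x ^ 2 + x ^ 3))]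
  simp only [firstMomentRatioDeriv, sqrt_sq hx.le, sqrt_sq hy.le]
  calc x * p (x ^ 2) - firstMoment p (x ^ 2) / (2 * x ^ 2 * x)
      ≤ x * p (y ^ 2) - firstMoment p (x ^ 2) / (2 * y ^ 2 * y) := by
        gcongr
    _ ≤ y * p (y ^ 2) - (firstMoment p (x ^ 2) + p (y ^ 2) * ((y ^ 2) ^ 2 - (x ^ 2) ^ 2) / 2)
          / (2 * y ^ 2 * y) := by
        have hgap : p (y ^ 2) * ((y ^ 2) ^ 2 - (x ^ 2) ^ 2) / 2 / (2 * y ^ 2 * y) ≤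
            (y - x) * p (y ^ 2) := by
          rw [div_le_iff₀ (by positivity)]
          nlinarith [mul_le_mul_of_nonneg_left hquartic hpb]
        rw [add_div]
        linarith
    _ ≤ y * p (y ^ 2) - firstMoment p (y ^ 2) / (2 * y ^ 2 * y) := by
        gcongr
        linarith

theorem monotoneOn_firstMomentRatioDeriv (hc : Continuous p) (hm : MonotoneOn p (Ici 0))
    (h0 : 0 ≤ p 0) : MonotoneOn (firstMomentRatioDeriv p) (Ioi 0) := by
  intro a ha b hb hab
  rw [← sq_sqrt (le_of_lt ha), ← sq_sqrt (le_of_lt hb)]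
  exact firstMomentRatioDeriv_sq_le hc hm h0 (sqrt_pos.2 ha) (sqrt_le_sqrt hab)

theorem continuousOn_firstMomentRatio (hc : Continuous p) (hm : MonotoneOn p (Ici 0))
    (h0 : 0 ≤ p 0) : ContinuousOn (firstMomentRatio p) (Ici 0) := by
  intro r hr
  rcases (mem_Ici.1 hr).eq_or_lt with rfl | hr
  · have hbound : ∀ s ∈ Ici (0 : ℝ), firstMomentRatio p s ≤ p s * s * √s / 2 := by
      intro s hs
      rcases (mem_Ici.1 hs).eq_or_lt with rfl | hs
      · simp [firstMomentRatio]
      rw [firstMomentRatio, div_le_iff₀ (sqrt_pos.2 hs)]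
      calc firstMoment p s ≤ p s * s ^ 2 / 2 := firstMoment_le hc hm hs.le
        _ = p s * s * √s / 2 * √s := by
          linear_combination (p s * s / 2) * (mul_self_sqrt hs.le).symm
    have hupper : Tendsto (fun s => p s * s * √s / 2) (𝓝[Ici 0] 0) (𝓝 0) := by
      have := ((hc.mul continuous_id).mul continuous_sqrt).div_const 2 |>.tendsto 0
      simpa using this.mono_left nhdsWithin_le_nhds
    rw [ContinuousWithinAt, show firstMomentRatio p 0 = 0 by simp [firstMomentRatio]]
    exact tendsto_of_tendsto_of_tendsto_of_le_of_le' tendsto_const_nhds hupper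
      (eventually_nhdsWithin_of_forall fun s hs => div_nonneg (firstMoment_nonneg hm h0 hs)
        (sqrt_nonneg s))
      (eventually_nhdsWithin_of_forall hbound)
  · exact (hasDerivAt_firstMomentRatio hc hr).continuousAt.continuousWithinAt

theorem convexOn_firstMomentRatio (hc : Continuous p) (hm : MonotoneOn p (Ici 0))
    (h0 : 0 ≤ p 0) : ConvexOn ℝ (Ici 0) (firstMomentRatio p) := by
  refine MonotoneOn.convexOn_of_deriv (convex_Ici 0) (continuousOn_firstMomentRatio hc hm h0)
    ?_ ?_ <;> rw [interior_Ici]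
  · exact fun r hr => (hasDerivAt_firstMomentRatio hc hr).differentiableAt.differentiableWithinAt
  · exact (monotoneOn_firstMomentRatioDeriv hc hm h0).congr fun r hr =>
      (hasDerivAt_firstMomentRatio hc hr).deriv.symm

theorem monotoneOn_firstMomentRatio (hc : Continuous p) (hm : MonotoneOn p (Ici 0))
    (h0 : 0 ≤ p 0) : MonotoneOn (firstMomentRatio p) (Ici 0) := by
  refine monotoneOn_of_deriv_nonneg (convex_Ici 0) (continuousOn_firstMomentRatio hc hm h0)
    ?_ ?_ <;> rw [interior_Ici]
  · exact fun r hr => (hasDerivAt_firstMomentRatio hc hr).differentiableAt.differentiableWithinAt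
  · intro r hr
    rw [(hasDerivAt_firstMomentRatio hc hr).deriv]
    exact firstMomentRatioDeriv_nonneg hc hm h0 hr

end FirstMoment

/-- `energyLoss e (v ^ 2) = 1 - e(v)²` is the fraction of normal kinetic energy lost at impact
speed `v`; parametrizing by `u = v²` turns `Ψ_e` into a first moment. -/
noncomputable def energyLoss (e : ℝ → ℝ) (u : ℝ) : ℝ := 1 - e (√u) ^ 2

theorem continuous_energyLoss {e : ℝ → ℝ} (hcont : ContinuousOn e (Ici 0)) :
    Continuous (energyLoss e) :=
  continuous_const.sub ((hcont.comp_continuous continuous_sqrt fun u => sqrt_nonneg u).pow 2)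

theorem monotone_energyLoss {e : ℝ → ℝ} (hpos : ∀ r ≥ 0, 0 < e r)
    (hmono : AntitoneOn e (Ici 0)) : Monotone (energyLoss e) := by
  intro u v huv
  have hle : e (√v) ≤ e (√u) := hmono (sqrt_nonneg u) (sqrt_nonneg v) (sqrt_le_sqrt huv)
  exact sub_le_sub_left (pow_le_pow_left₀ (hpos _ (sqrt_nonneg v)).le hle 2) 1

theorem dissipationPotential_eq_firstMomentRatio (e : ℝ → ℝ) {r : ℝ} (hr : 0 ≤ r) :
    dissipationPotential e r = firstMomentRatio (energyLoss e) r / 4 := by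
  rcases hr.eq_or_lt with rfl | hpos
  · simp [dissipationPotential, firstMomentRatio]
  have hsubst := intervalIntegral.integral_comp_mul_deriv_of_deriv_nonneg
    (f := fun z => r * z ^ 2) (f' := fun z => 2 * r * z) (g := fun u => u * energyLoss e u)
    (by fun_prop) (fun z _ => by simpa [mul_comm, mul_assoc, mul_left_comm] using
      (hasDerivAt_pow 2 z).const_mul r)
    (fun z hz => by rw [min_eq_left zero_le_one] at hz; have := hz.1; positivity)
  rw [zero_pow two_ne_zero, one_pow, mul_zero, mul_one] at hsubst
  have hintegrand : EqOn (fun z => (1 - e (√r * z) ^ 2) * z ^ 3)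
      (fun z => (2 * r ^ 2)⁻¹ *
        (((fun u => u * energyLoss e u) ∘ fun z => r * z ^ 2) z * (2 * r * z)))
      (uIcc 0 1) := by
    intro z hz
    rw [uIcc_of_le zero_le_one] at hz
    have hsqrt : √(r * z ^ 2) = √r * z := by rw [sqrt_mul hr, sqrt_sq hz.1]
    simp only [Function.comp, energyLoss, hsqrt]
    field_simp
  rw [dissipationPotential, intervalIntegral.integral_congr hintegrand,
    intervalIntegral.integral_const_mul, hsubst, ← firstMoment, firstMomentRatio,
    show (3 : ℝ) / 2 = 1 + 1 / 2 by norm_num, rpow_add hpos, rpow_one, ← sqrt_eq_rpow]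
  field_simp
  rw [sq_sqrt hr]
  ring

theorem stmt1_general (e : ℝ → ℝ)
    (hrange : ∀ r ≥ (0 : ℝ), 0 < e r ∧ e r ≤ 1)
    (hcont : ContinuousOn e (Set.Ici 0))
    (hmono : AntitoneOn e (Set.Ici 0)) :
    ConvexOn ℝ (Set.Ici 0) (dissipationPotential e) ∧
      MonotoneOn (dissipationPotential e) (Set.Ici 0) := by
  have hc := continuous_energyLoss hcont
  have hm := (monotone_energyLoss (fun r hr => (hrange r hr).1) hmono).monotoneOn (Ici 0)
  have h0 : 0 ≤ energyLoss e 0 := by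
    obtain ⟨hpos, hle⟩ := hrange 0 le_rfl
    simpa only [energyLoss, sqrt_zero, sub_nonneg] using pow_le_one₀ hpos.le hle
  have heq : EqOn (fun r => (4 : ℝ)⁻¹ • firstMomentRatio (energyLoss e) r)
      (dissipationPotential e) (Ici 0) := fun r hr => by
    simp only [dissipationPotential_eq_firstMomentRatio e hr, smul_eq_mul, inv_mul_eq_div]
  refine ⟨((convexOn_firstMomentRatio hc hm h0).smul (by norm_num)).congr heq, ?_⟩
  refine MonotoneOn.congr (fun a ha b hb hab => ?_) heq
  exact smul_le_smul_of_nonneg_left (monotoneOn_firstMomentRatio hc hm h0 ha hb hab)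
    (by norm_num)

theorem stmt1 (e : ℝ → ℝ)
    (hrange : ∀ r ≥ (0 : ℝ), 0 < e r ∧ e r ≤ 1)
    (hcont : ContinuousOn e (Set.Ici 0))
    (hmono : AntitoneOn e (Set.Ici 0))
    (hθ : StrictMonoOn (fun r => r * e r) (Set.Ici 0)) :
    ConvexOn ℝ (Set.Ici 0) (dissipationPotential e) ∧
      MonotoneOn (dissipationPotential e) (Set.Ici 0) :=
  stmt1_general e hrange hcont hmono
end

section
/- Let e be a restitution coefficient in class 𝒞₀ and define 𝒥_e(ϱ) = (1/2)(1 + ϑ_e'(α_e(ϱ))) β_e²(α_e(ϱ)) where ϑ_e(r) = r e(r), β_e(r) = (1+e(r))/2, and α_e is the inverse of r ↦ r β_e(r). Then 1/8 ≤ 𝒥_e(ϱ) ≤ 1 for all ϱ ≥ 0. -/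
open Real Set Filter Topology

theorem stmt6 (e αe : ℝ → ℝ)
    (h0 : e 0 = 1)
    (hrange : ∀ r ≥ (0 : ℝ), 0 < e r ∧ e r ≤ 1)
    (hcont : ContinuousOn e (Set.Ici 0))
    (hmono : AntitoneOn e (Set.Ici 0))
    (hθ : StrictMonoOn (fun r => r * e r) (Set.Ici 0))
    (hdiff : ∀ r > (0 : ℝ), DifferentiableAt ℝ (fun s => s * e s) r)
    (hinv : ∀ ϱ ≥ (0 : ℝ), 0 ≤ αe ϱ ∧ αe ϱ * ((1 + e (αe ϱ)) / 2) = ϱ) :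
    ∀ ϱ ≥ (0 : ℝ),
      1 / 8 ≤ 1 / 2 * (1 + deriv (fun s => s * e s) (αe ϱ))
                * ((1 + e (αe ϱ)) / 2) ^ 2 ∧
      1 / 2 * (1 + deriv (fun s => s * e s) (αe ϱ))
                * ((1 + e (αe ϱ)) / 2) ^ 2 ≤ 1 := by
  intro ϱ hϱ
  obtain ⟨ha, -⟩ := hinv ϱ hϱ
  set r := αe ϱ with hrdef
  have her := hrange r ha
  set d := deriv (fun s => s * e s) r with hd
  have hdb : 0 ≤ d ∧ d ≤ 1 := by
    by_cases hdf : DifferentiableAt ℝ (fun s => s * e s) r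
    · have hda : HasDerivWithinAt (fun s => s * e s) d (Ioi r) r :=
        hdf.hasDerivAt.hasDerivWithinAt
      rw [hasDerivWithinAt_iff_tendsto_slope] at hda
      have hset : Ioi r \ {r} = Ioi r :=
        Set.diff_singleton_eq_self (by simp)
      rw [hset] at hda
      have hev : ∀ᶠ x in 𝓝[>] r,
          slope (fun s => s * e s) r x ∈ Set.Icc (0:ℝ) 1 := by
        filter_upwards [self_mem_nhdsWithin] with x hx
        have hrx : r < x := hx
        have hx0 : (0:ℝ) ≤ x := le_trans ha hrx.le
        have hex := hrange x hx0
        have hemono : e x ≤ e r := hmono ha hx0 hrx.le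
        have hnum : r * e r < x * e x := hθ ha hx0 hrx
        have hden : (0:ℝ) < x - r := sub_pos.mpr hrx
        rw [slope_def_field]
        constructor
        · exact div_nonneg (by linarith) hden.le
        · rw [div_le_one hden]
          have h1 : x * e x ≤ x * e r := mul_le_mul_of_nonneg_left hemono hx0
          have h2 : e r ≤ 1 := her.2
          nlinarith
      constructor
      · exact ge_of_tendsto hda (hev.mono fun x hx => hx.1)
      · exact le_of_tendsto hda (hev.mono fun x hx => hx.2)
    · rw [hd, deriv_zero_of_not_differentiableAt hdf]
      norm_num
  obtain ⟨hd0, hd1⟩ := hdb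
  constructor
  · nlinarith [her.1, her.2, mul_nonneg hd0 (sq_nonneg (1 + e r)), sq_nonneg (e r)]
  · nlinarith [her.1, her.2, sq_nonneg (1 + e r), mul_nonneg hd0 (her.1.le)]
end

section
/- Let e be in class 𝒞₀ and s ∈ [0,1]. Define μ_e(z) = α_e(|z|)/|z| for z ≠ 0, where α_e is the inverse of r ↦ r(1+e(r))/2. Then there exists a restitution coefficient ẽ_s in class 𝒞₀ such that 1 + s(μ_e(z) - 1) = μ_{ẽ_s}(z) for all z ∈ ℝ³ \ {0}; explicitly, ẽ_s is determined by the inverse map α(r) = (1-s) r + s α_e(r), which satisfies r ≤ α(r) ≤ 2r, α(r)/r ≤ α'(r) ≤ 2 for r > 0 and α'(0) = 1. -/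
open Real Set

abbrev E3 := EuclideanSpace ℝ (Fin 3)

/-!
Work with `α = η_ẽ⁻¹` instead of `ẽ`. The conditions `r ≤ α r < 2 r`, `α r / r ≤ α' r ≤ 2`,
`α' 0 = 1` and strict monotonicity of `r ↦ 2 r - α r` are all preserved under
`α ↦ (1 - s) id + s α`, and `μ` is affine in `α`. Conversely such an `α` comes from
`ẽ t = 2 β t / t - 1`, `β = α⁻¹`: `α r / r` is nondecreasing because `α' ≥ α r / r`, which makes `ẽ`
antitone; `t ẽ t = 2 β t - t` is `2 r - α r` at `r = β t`, hence strictly increasing; and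
`α r / r → 1` as `r → 0⁺` gives continuity of `ẽ` at `0`.
-/

open Filter Topology

structure IsRestitutionCoeff (e : ℝ → ℝ) : Prop where
  map_zero : e 0 = 1
  mem_Ioc : ∀ r ≥ 0, e r ∈ Ioc 0 1
  continuousOn : ContinuousOn e (Ici 0)
  antitoneOn : AntitoneOn e (Ici 0)
  strictMonoOn_mul_self : StrictMonoOn (fun r => r * e r) (Ici 0)

/-- The conditions of Lemma A.1 on `α = η_ẽ⁻¹`, where `α r < 2 r` and the strict monotonicity of
`r ↦ 2 r - α r = ϑ_ẽ (α r)` account for `0 < ẽ` and the strict monotonicity of `ϑ_ẽ`. -/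
structure IsAdmissibleInverse (α : ℝ → ℝ) : Prop where
  map_zero : α 0 = 0
  le_apply : ∀ r > 0, r ≤ α r
  apply_lt : ∀ r > 0, α r < 2 * r
  differentiableAt : ∀ r > 0, DifferentiableAt ℝ α r
  div_le_deriv : ∀ r > 0, α r / r ≤ deriv α r
  deriv_le : ∀ r > 0, deriv α r ≤ 2
  hasDerivWithinAt_zero : HasDerivWithinAt α 1 (Ici 0) 0
  strictMonoOn_two_mul_sub : StrictMonoOn (fun r => 2 * r - α r) (Ici 0)

section Quotient

variable {α : ℝ → ℝ}

theorem monotoneOn_div_self_of_div_le_deriv (hdiff : ∀ r > 0, DifferentiableAt ℝ α r)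
    (hderiv : ∀ r > 0, α r / r ≤ deriv α r) : MonotoneOn (fun r => α r / r) (Ioi 0) := by
  refine monotoneOn_of_hasDerivWithinAt_nonneg (convex_Ioi 0)
    (f' := fun r => (deriv α r * r - α r * 1) / r ^ 2)
    (fun r hr => ((hdiff r hr).continuousAt.div continuousAt_id hr.ne').continuousWithinAt)
    (fun r hr => ?_) (fun r hr => ?_) <;> rw [interior_Ioi] at hr
  · exact ((hdiff r hr).hasDerivAt.div (hasDerivAt_id' r) hr.ne').hasDerivWithinAt
  · have h := (div_le_iff₀ hr).1 (hderiv r hr)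
    exact div_nonneg (by linarith) (sq_nonneg r)

theorem strictMonoOn_of_le_of_monotoneOn_div (h0 : α 0 = 0) (hle : ∀ r > 0, r ≤ α r)
    (hquot : MonotoneOn (fun r => α r / r) (Ioi 0)) : StrictMonoOn α (Ici 0) := by
  intro a ha b hb hab
  have hb0 : 0 < b := lt_of_le_of_lt ha hab
  rcases (mem_Ici.1 ha).eq_or_lt with rfl | ha0
  · rw [h0]
    exact hb0.trans_le (hle b hb0)
  · have hq : α a / a ≤ α b / b := hquot ha0 hb0 hab.le
    have hq1 : 0 < α b / b := div_pos (hb0.trans_le (hle b hb0)) hb0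
    calc α a = a * (α a / a) := by field_simp
      _ ≤ a * (α b / b) := by gcongr
      _ < b * (α b / b) := by gcongr
      _ = α b := by field_simp

theorem tendsto_div_self_of_hasDerivWithinAt (h0 : α 0 = 0)
    (hα0 : HasDerivWithinAt α 1 (Ici 0) 0) : Tendsto (fun r => α r / r) (𝓝[>] 0) (𝓝 1) := by
  have hslope : slope α 0 = fun r => α r / r := by
    funext r
    simp [slope_def_field, h0]
  exact hslope ▸ (hasDerivWithinAt_iff_tendsto_slope' (lt_irrefl 0)).1 hα0.Ioi_of_Ici

end Quotient

section Inverse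

variable {α : ℝ → ℝ}

def extendById (α : ℝ → ℝ) (r : ℝ) : ℝ := α (max r 0) + min r 0

theorem extendById_of_nonneg {r : ℝ} (hr : 0 ≤ r) : extendById α r = α r := by
  simp [extendById, hr]

theorem extendById_of_nonpos (h0 : α 0 = 0) {r : ℝ} (hr : r ≤ 0) : extendById α r = r := by
  simp [extendById, hr, h0]

theorem strictMono_extendById (h0 : α 0 = 0) (hmono : StrictMonoOn α (Ici 0)) :
    StrictMono (extendById α) := by
  intro a b hab
  rcases le_or_gt b 0 with hb | hb
  · rwa [extendById_of_nonpos h0 (hab.le.trans hb), extendById_of_nonpos h0 hb]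
  rw [extendById_of_nonneg hb.le]
  rcases le_or_gt a 0 with ha | ha
  · rw [extendById_of_nonpos h0 ha]
    exact ha.trans_lt (h0 ▸ hmono (mem_Ici.2 le_rfl) hb.le hb)
  · rw [extendById_of_nonneg ha.le]
    exact hmono ha.le hb.le hab

theorem continuous_extendById (hcont : ContinuousOn α (Ici 0)) : Continuous (extendById α) :=
  (hcont.comp_continuous (continuous_id.max continuous_const) fun r => le_max_right r 0).add
    (continuous_id.min continuous_const)

theorem surjective_extendById (h0 : α 0 = 0) (hcont : ContinuousOn α (Ici 0))
    (hle : ∀ r > 0, r ≤ α r) : Function.Surjective (extendById α) := by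
  refine (continuous_extendById hcont).surjective ?_ ?_
  · refine tendsto_atTop_mono' _ ?_ tendsto_id
    filter_upwards [eventually_gt_atTop 0] with r hr
    rw [extendById_of_nonneg hr.le]
    exact hle r hr
  · refine tendsto_id.congr' ?_
    filter_upwards [eventually_le_atBot 0] with r hr
    exact (extendById_of_nonpos h0 hr).symm

theorem exists_continuous_strictMono_inverse (h0 : α 0 = 0) (hcont : ContinuousOn α (Ici 0))
    (hmono : StrictMonoOn α (Ici 0)) (hle : ∀ r > 0, r ≤ α r) :
    ∃ β : ℝ → ℝ, Continuous β ∧ StrictMono β ∧ β 0 = 0 ∧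
      (∀ t ≥ 0, α (β t) = t) ∧ ∀ r ≥ 0, β (α r) = r := by
  set φ := (strictMono_extendById h0 hmono).orderIsoOfSurjective _
    (surjective_extendById h0 hcont hle)
  have hφ : ∀ r, φ r = extendById α r := fun r => rfl
  have hφ0 : φ.symm 0 = 0 := by
    rw [φ.symm_apply_eq, hφ, extendById_of_nonneg le_rfl, h0]
  refine ⟨φ.symm, φ.symm.continuous, φ.symm.strictMono, hφ0, fun t ht => ?_, fun r hr => ?_⟩
  · have hnonneg : 0 ≤ φ.symm t := hφ0 ▸ φ.symm.monotone ht
    rw [← extendById_of_nonneg (α := α) hnonneg, ← hφ, φ.apply_symm_apply]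
  · rw [← extendById_of_nonneg (α := α) hr, ← hφ, φ.symm_apply_apply]

end Inverse

section Restitution

variable {α β : ℝ → ℝ}

-- Solves `t (1 + ẽ t) / 2 = β t` for `ẽ t` when `t ≠ 0`.
noncomputable def restitutionOfInverse (β : ℝ → ℝ) (t : ℝ) : ℝ :=
  if t = 0 then 1 else 2 * β t / t - 1

theorem restitutionOfInverse_zero : restitutionOfInverse β 0 = 1 := if_pos rfl

theorem mul_restitutionOfInverse (hβ0 : β 0 = 0) (t : ℝ) :
    t * restitutionOfInverse β t = 2 * β t - t := by
  rcases eq_or_ne t 0 with rfl | ht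
  · simp [hβ0]
  · rw [restitutionOfInverse, if_neg ht]
    field_simp

theorem restitutionOfInverse_eq_inv_div {t : ℝ} (ht : t ≠ 0) (hαβ : α (β t) = t) :
    restitutionOfInverse β t = 2 * (α (β t) / β t)⁻¹ - 1 := by
  rw [restitutionOfInverse, if_neg ht, inv_div, hαβ, mul_div_assoc]

theorem continuousOn_restitutionOfInverse (hβ : Continuous β) (hβ0 : β 0 = 0)
    (hβpos : ∀ t > 0, 0 < β t) (hαβ : ∀ t ≥ 0, α (β t) = t)
    (hslope : Tendsto (fun r => α r / r) (𝓝[>] 0) (𝓝 1)) :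
    ContinuousOn (restitutionOfInverse β) (Ici 0) := by
  intro t ht
  rcases (mem_Ici.1 ht).eq_or_lt with rfl | ht
  · have hβ' : Tendsto β (𝓝[>] 0) (𝓝[>] 0) :=
      tendsto_nhdsWithin_iff.2 ⟨(hβ.tendsto' 0 0 hβ0).mono_left nhdsWithin_le_nhds,
        eventually_nhdsWithin_of_forall hβpos⟩
    have hlim := ((hslope.comp hβ').inv₀ one_ne_zero).const_mul 2 |>.sub_const 1
    rw [← continuousWithinAt_Ioi_iff_Ici, ContinuousWithinAt, restitutionOfInverse_zero]
    refine (by norm_num : (2 : ℝ) * 1⁻¹ - 1 = 1) ▸ hlim.congr' ?_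
    filter_upwards [self_mem_nhdsWithin] with t ht
    exact (restitutionOfInverse_eq_inv_div ht.ne' (hαβ t ht.le)).symm
  · refine ContinuousAt.continuousWithinAt ?_
    have hc : ContinuousAt (fun t => 2 * β t / t - 1) t :=
      ((hβ.continuousAt.const_mul 2).div continuousAt_id ht.ne').sub continuousAt_const
    refine hc.congr ?_
    filter_upwards [eventually_ne_nhds ht.ne'] with t ht
    rw [restitutionOfInverse, if_neg ht]

theorem isRestitutionCoeff_restitutionOfInverse (hβ : Continuous β) (hβm : StrictMono β)
    (hβ0 : β 0 = 0) (hαβ : ∀ t ≥ 0, α (β t) = t) (hle : ∀ r > 0, r ≤ α r)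
    (hlt : ∀ r > 0, α r < 2 * r)
    (hquot : MonotoneOn (fun r => α r / r) (Ioi 0))
    (hgap : StrictMonoOn (fun r => 2 * r - α r) (Ici 0))
    (hslope : Tendsto (fun r => α r / r) (𝓝[>] 0) (𝓝 1)) :
    IsRestitutionCoeff (restitutionOfInverse β) := by
  have hβpos : ∀ t > 0, 0 < β t := fun t ht => hβ0 ▸ hβm ht
  have hβnonneg : ∀ t ≥ 0, 0 ≤ β t := fun t ht => hβ0 ▸ hβm.monotone ht
  have hmem : ∀ t ≥ 0, restitutionOfInverse β t ∈ Ioc 0 1 := by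
    intro t ht
    rcases ht.eq_or_lt with rfl | ht
    · rw [restitutionOfInverse_zero]
      exact ⟨one_pos, le_rfl⟩
    have hq : 1 ≤ α (β t) / β t := (one_le_div (hβpos t ht)).2 (hle (β t) (hβpos t ht))
    rw [restitutionOfInverse_eq_inv_div ht.ne' (hαβ t ht.le), mem_Ioc, ← div_eq_mul_inv,
      sub_pos, one_lt_div (by positivity), sub_le_iff_le_add, div_le_iff₀ (by positivity)]
    exact ⟨(div_lt_iff₀ (hβpos t ht)).2 (hlt (β t) (hβpos t ht)), by linarith⟩
  refine ⟨restitutionOfInverse_zero, hmem,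
    continuousOn_restitutionOfInverse hβ hβ0 hβpos hαβ hslope, ?_, ?_⟩
  · intro a ha b hb hab
    rcases (mem_Ici.1 ha).eq_or_lt with rfl | ha
    · exact restitutionOfInverse_zero (β := β) ▸ (hmem b hb).2
    have hb := ha.trans_le hab
    have hq := hquot (hβpos a ha) (hβpos b hb) (hβm.monotone hab)
    have hqa : 0 < α (β a) / β a := by
      rw [hαβ a ha.le]
      exact div_pos ha (hβpos a ha)
    rw [restitutionOfInverse_eq_inv_div ha.ne' (hαβ a ha.le),
      restitutionOfInverse_eq_inv_div hb.ne' (hαβ b hb.le)]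
    gcongr
  · intro a ha b hb hab
    have h := hgap (hβnonneg a ha) (hβnonneg b hb) (hβm hab)
    simp only [hαβ a ha, hαβ b hb] at h
    simpa only [mul_restitutionOfInverse hβ0] using h

end Restitution

theorem IsAdmissibleInverse.exists_isRestitutionCoeff {α : ℝ → ℝ} (hα : IsAdmissibleInverse α) :
    ∃ e, IsRestitutionCoeff e ∧ ∀ r ≥ 0, α r * ((1 + e (α r)) / 2) = r := by
  have hcont : ContinuousOn α (Ici 0) := fun r hr => by
    rcases (mem_Ici.1 hr).eq_or_lt with rfl | hr
    exacts [hα.hasDerivWithinAt_zero.continuousWithinAt,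
      (hα.differentiableAt r hr).continuousAt.continuousWithinAt]
  have hquot := monotoneOn_div_self_of_div_le_deriv hα.differentiableAt hα.div_le_deriv
  obtain ⟨β, hβ, hβm, hβ0, hαβ, hβα⟩ := exists_continuous_strictMono_inverse hα.map_zero hcont
    (strictMonoOn_of_le_of_monotoneOn_div hα.map_zero hα.le_apply hquot) hα.le_apply
  refine ⟨restitutionOfInverse β, isRestitutionCoeff_restitutionOfInverse hβ hβm hβ0 hαβ
    hα.le_apply hα.apply_lt hquot hα.strictMonoOn_two_mul_sub
    (tendsto_div_self_of_hasDerivWithinAt hα.map_zero hα.hasDerivWithinAt_zero), fun r hr => ?_⟩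
  have h := mul_restitutionOfInverse hβ0 (α r)
  rw [hβα r hr] at h
  linear_combination h / 2

theorem strictMonoOn_two_mul_sub_of_inverse {e αe : ℝ → ℝ}
    (hθ : StrictMonoOn (fun r => r * e r) (Ici 0))
    (hinv : ∀ r ≥ 0, αe r * ((1 + e (αe r)) / 2) = r)
    (h0 : αe 0 = 0) (hmono : StrictMonoOn αe (Ici 0)) :
    StrictMonoOn (fun r => 2 * r - αe r) (Ici 0) := by
  have hmaps : MapsTo αe (Ici 0) (Ici 0) := fun r hr =>
    h0 ▸ hmono.monotoneOn (mem_Ici.2 le_rfl) hr hr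
  refine (hθ.comp hmono hmaps).congr fun r hr => ?_
  have h := hinv r hr
  simp only [Function.comp]
  linarith

theorem isAdmissibleInverse_of_inverse {e αe : ℝ → ℝ} (h0 : αe 0 = 0)
    (hpos : ∀ r ≥ 0, 0 < e r) (hθ : StrictMonoOn (fun r => r * e r) (Ici 0))
    (hinv : ∀ r ≥ 0, αe r * ((1 + e (αe r)) / 2) = r) (hle : ∀ r > 0, r ≤ αe r)
    (hdiff : ∀ r > 0, DifferentiableAt ℝ αe r) (hderiv : ∀ r > 0, αe r / r ≤ deriv αe r)
    (hderiv_le : ∀ r > 0, deriv αe r ≤ 2) (hα0 : HasDerivWithinAt αe 1 (Ici 0) 0) :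
    IsAdmissibleInverse αe where
  map_zero := h0
  le_apply := hle
  apply_lt r hr := by
    have hαpos : 0 < αe r := hr.trans_le (hle r hr)
    nlinarith [hinv r hr.le, mul_pos hαpos (hpos (αe r) hαpos.le)]
  differentiableAt := hdiff
  div_le_deriv := hderiv
  deriv_le := hderiv_le
  hasDerivWithinAt_zero := hα0
  strictMonoOn_two_mul_sub := strictMonoOn_two_mul_sub_of_inverse hθ hinv h0 <|
    strictMonoOn_of_le_of_monotoneOn_div h0 hle (monotoneOn_div_self_of_div_le_deriv hdiff hderiv)

theorem StrictMonoOn.one_sub_mul_add_mul {g : ℝ → ℝ} {S : Set ℝ} {s : ℝ} (hs : s ∈ Icc 0 1)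
    (hg : StrictMonoOn g S) : StrictMonoOn (fun r => (1 - s) * r + s * g r) S := by
  intro a ha b hb hab
  have h := hg ha hb hab
  obtain ⟨hs0, hs1⟩ := hs
  rcases hs0.eq_or_lt with rfl | hs0
  · simpa using hab
  · dsimp only
    nlinarith

theorem IsAdmissibleInverse.one_sub_mul_add_mul {α : ℝ → ℝ} (hα : IsAdmissibleInverse α) {s : ℝ}
    (hs : s ∈ Icc 0 1) : IsAdmissibleInverse (fun t => (1 - s) * t + s * α t) := by
  obtain ⟨hs0, hs1⟩ := hs
  have hderiv : ∀ r > 0,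
      HasDerivAt (fun t => (1 - s) * t + s * α t) ((1 - s) * 1 + s * deriv α r) r := fun r hr =>
    ((hasDerivAt_id' r).const_mul (1 - s)).add ((hα.differentiableAt r hr).hasDerivAt.const_mul s)
  refine ⟨by simp [hα.map_zero], fun r hr => ?_, fun r hr => ?_,
    fun r hr => (hderiv r hr).differentiableAt, fun r hr => ?_, fun r hr => ?_, ?_, ?_⟩
  · nlinarith [hα.le_apply r hr]
  · nlinarith [hα.le_apply r hr, hα.apply_lt r hr]
  · have hquot : ((1 - s) * r + s * α r) / r = (1 - s) + s * (α r / r) := by field_simp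
    rw [(hderiv r hr).deriv, hquot]
    nlinarith [hα.div_le_deriv r hr]
  · rw [(hderiv r hr).deriv]
    nlinarith [hα.deriv_le r hr]
  · have h := ((hasDerivAt_id' 0).const_mul (1 - s)).hasDerivWithinAt.add
      (hα.hasDerivWithinAt_zero.const_mul s)
    rwa [mul_one, mul_one, sub_add_cancel] at h
  · exact (hα.strictMonoOn_two_mul_sub.one_sub_mul_add_mul ⟨hs0, hs1⟩).congr fun r _ => by ring

theorem stmt7_general (e αe : ℝ → ℝ) (s : ℝ) (hs : s ∈ Set.Icc (0 : ℝ) 1)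
    (hrange : ∀ r ≥ (0 : ℝ), 0 < e r ∧ e r ≤ 1)
    (hθ : StrictMonoOn (fun r => r * e r) (Set.Ici 0))
    (hinv : ∀ r ≥ (0 : ℝ),
      αe (r * ((1 + e r) / 2)) = r ∧ αe r * ((1 + e (αe r)) / 2) = r)
    (hαbnd : ∀ r > (0 : ℝ), r ≤ αe r ∧ αe r ≤ 2 * r)
    (hαdiff : ∀ r > (0 : ℝ), DifferentiableAt ℝ αe r ∧
      αe r / r ≤ deriv αe r ∧ deriv αe r ≤ 2)
    (hα0 : HasDerivWithinAt αe 1 (Set.Ici 0) 0) :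
    (∀ r > (0 : ℝ), r ≤ (1 - s) * r + s * αe r ∧ (1 - s) * r + s * αe r ≤ 2 * r) ∧
    (∀ r > (0 : ℝ),
      ((1 - s) * r + s * αe r) / r ≤ deriv (fun t => (1 - s) * t + s * αe t) r ∧
      deriv (fun t => (1 - s) * t + s * αe t) r ≤ 2) ∧
    HasDerivWithinAt (fun t => (1 - s) * t + s * αe t) 1 (Set.Ici 0) 0 ∧
    ∃ es : ℝ → ℝ,
      es 0 = 1 ∧
      (∀ r ≥ (0 : ℝ), 0 < es r ∧ es r ≤ 1) ∧
      ContinuousOn es (Set.Ici 0) ∧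
      AntitoneOn es (Set.Ici 0) ∧
      StrictMonoOn (fun r => r * es r) (Set.Ici 0) ∧
      (∀ r ≥ (0 : ℝ),
        ((1 - s) * r + s * αe r) * ((1 + es ((1 - s) * r + s * αe r)) / 2) = r) ∧
      (∀ z : E3, z ≠ 0 →
        1 + s * (αe ‖z‖ / ‖z‖ - 1) = ((1 - s) * ‖z‖ + s * αe ‖z‖) / ‖z‖) := by
  have hαe : IsAdmissibleInverse αe :=
    isAdmissibleInverse_of_inverse (by simpa using (hinv 0 le_rfl).1) (fun r hr => (hrange r hr).1)
      hθ (fun r hr => (hinv r hr).2) (fun r hr => (hαbnd r hr).1) (fun r hr => (hαdiff r hr).1)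
      (fun r hr => (hαdiff r hr).2.1) (fun r hr => (hαdiff r hr).2.2) hα0
  have hα := hαe.one_sub_mul_add_mul hs
  obtain ⟨es, hes, hes_inv⟩ := hα.exists_isRestitutionCoeff
  refine ⟨fun r hr => ⟨hα.le_apply r hr, (hα.apply_lt r hr).le⟩,
    fun r hr => ⟨hα.div_le_deriv r hr, hα.deriv_le r hr⟩, hα.hasDerivWithinAt_zero,
    es, hes.map_zero, hes.mem_Ioc, hes.continuousOn, hes.antitoneOn, hes.strictMonoOn_mul_self,
    hes_inv, fun z hz => ?_⟩
  field_simp [norm_ne_zero_iff.2 hz]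
  ring

theorem stmt7 (e αe : ℝ → ℝ) (s : ℝ) (hs : s ∈ Set.Icc (0 : ℝ) 1)
    (h0 : e 0 = 1)
    (hrange : ∀ r ≥ (0 : ℝ), 0 < e r ∧ e r ≤ 1)
    (hcont : ContinuousOn e (Set.Ici 0))
    (hmono : AntitoneOn e (Set.Ici 0))
    (hθ : StrictMonoOn (fun r => r * e r) (Set.Ici 0))
    (hinv : ∀ r ≥ (0 : ℝ),
      αe (r * ((1 + e r) / 2)) = r ∧ αe r * ((1 + e (αe r)) / 2) = r)
    (hαbnd : ∀ r > (0 : ℝ), r ≤ αe r ∧ αe r ≤ 2 * r)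
    (hαdiff : ∀ r > (0 : ℝ), DifferentiableAt ℝ αe r ∧
      αe r / r ≤ deriv αe r ∧ deriv αe r ≤ 2)
    (hα0 : HasDerivWithinAt αe 1 (Set.Ici 0) 0) :
    (∀ r > (0 : ℝ), r ≤ (1 - s) * r + s * αe r ∧ (1 - s) * r + s * αe r ≤ 2 * r) ∧
    (∀ r > (0 : ℝ),
      ((1 - s) * r + s * αe r) / r ≤ deriv (fun t => (1 - s) * t + s * αe t) r ∧
      deriv (fun t => (1 - s) * t + s * αe t) r ≤ 2) ∧
    HasDerivWithinAt (fun t => (1 - s) * t + s * αe t) 1 (Set.Ici 0) 0 ∧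
    ∃ es : ℝ → ℝ,
      es 0 = 1 ∧
      (∀ r ≥ (0 : ℝ), 0 < es r ∧ es r ≤ 1) ∧
      ContinuousOn es (Set.Ici 0) ∧
      AntitoneOn es (Set.Ici 0) ∧
      StrictMonoOn (fun r => r * es r) (Set.Ici 0) ∧
      (∀ r ≥ (0 : ℝ),
        ((1 - s) * r + s * αe r) * ((1 + es ((1 - s) * r + s * αe r)) / 2) = r) ∧
      (∀ z : E3, z ≠ 0 →
        1 + s * (αe ‖z‖ / ‖z‖ - 1) = ((1 - s) * ‖z‖ + s * αe ‖z‖) / ‖z‖) :=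
  stmt7_general e αe s hs hrange hθ hinv hαbnd hαdiff hα0
end
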